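/- arXiv:1002.2731 — 2 statements merged into one kernel-verified Lean document; each statement's English description precedes it below -/
import Mathlib

section
/- Let x = Σ_{n=1}^∞ 2^{-a_n} where a_n = 4^n. Then the Takagi function T does not have a (two-sided) derivative at x, even in the extended sense of an improper infinite derivative: the difference quotients (T(y)-T(z))/(y-z) over nested intervals [z,y] containing x do not tend to a common limit in the extended reals. -/
/-!
The partial sum `a_n` of `x` is a dyadic rational with `N = 4^(n+1)` binary digits, and over a
dyadic interval of length `2^-N` the Takagi function is affine, of slope `#0s - #1s` of the
digits, plus a copy of itself scaled by `2^-N`. Over `[a_n, a_n + 2^-N]`, which contains `x`,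
the secant slope is therefore `N - 2(n+1) → ∞`. Just left of `a_n` the slope is `s = N - 2n`,
and `T(2^-j) = j 2^-j` gives `T(a_n - 2^-(N+s)) = T(a_n)`; since `x - a_n ≤ 2^-3N` is tiny
compared with `2^-(N+s) ≥ 2^-2N`, the secant slope over `[a_n - 2^-(N+s), x]` tends to `0`.
-/

open Filter Topology Set

noncomputable def tent (x : ℝ) : ℝ := min (2*x) (2-2*x)

noncomputable def takagi (x : ℝ) : ℝ := ∑' n : ℕ, tent^[n+1] x / 2^(n+1)

lemma tent_mapsTo : MapsTo tent (Icc 0 1) (Icc 0 1) := by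
  rintro x ⟨h0, h1⟩
  refine ⟨le_min (by linarith) (by linarith), ?_⟩
  rcases le_total x (1/2) with h | h
  · exact (min_le_left _ _).trans (by linarith)
  · exact (min_le_right _ _).trans (by linarith)

lemma tent_one_sub (x : ℝ) : tent (1 - x) = tent x := by
  unfold tent
  rw [min_comm]
  ring_nf

lemma tent_half_mul {u : ℝ} (hu : u ≤ 1) : tent (u / 2) = u := by
  unfold tent
  rw [min_eq_left (by linarith)]
  ring

lemma takagi_term_mem_Icc {x : ℝ} (hx : x ∈ Icc (0:ℝ) 1) (n : ℕ) :
    tent^[n+1] x / 2^(n+1) ∈ Icc 0 (1/2/2^n) := by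
  obtain ⟨h0, h1⟩ := tent_mapsTo.iterate (n+1) hx
  rw [div_div, ← pow_succ']
  exact ⟨by positivity, by gcongr⟩

lemma takagi_summable {x : ℝ} (hx : x ∈ Icc (0:ℝ) 1) :
    Summable (fun n : ℕ => tent^[n+1] x / 2^(n+1)) :=
  .of_nonneg_of_le (fun n => (takagi_term_mem_Icc hx n).1) (fun n => (takagi_term_mem_Icc hx n).2)
    (summable_geometric_two' 1)

lemma takagi_mem_Icc {x : ℝ} (hx : x ∈ Icc (0:ℝ) 1) : takagi x ∈ Icc 0 1 := by
  refine ⟨tsum_nonneg fun n => (takagi_term_mem_Icc hx n).1, ?_⟩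
  calc takagi x ≤ ∑' n : ℕ, (1:ℝ)/2/2^n :=
        (takagi_summable hx).tsum_le_tsum (fun n => (takagi_term_mem_Icc hx n).2)
          (summable_geometric_two' 1)
    _ = 1 := tsum_geometric_two' 1

lemma takagi_zero : takagi 0 = 0 := by
  have h : Function.IsFixedPt tent 0 := by norm_num [Function.IsFixedPt, tent]
  rw [takagi, tsum_congr fun n => by rw [(h.iterate (n+1)).eq, zero_div], tsum_zero]

lemma takagi_one_sub (x : ℝ) : takagi (1 - x) = takagi x := by
  unfold takagi
  refine tsum_congr fun n => ?_
  rw [Function.iterate_succ_apply, Function.iterate_succ_apply, tent_one_sub]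

lemma takagi_one : takagi 1 = 0 := by
  simpa using (takagi_one_sub 0).trans takagi_zero

lemma takagi_eq_tent_add {x : ℝ} (hx : x ∈ Icc (0:ℝ) 1) :
    takagi x = tent x / 2 + takagi (tent x) / 2 := by
  rw [takagi, (takagi_summable hx).tsum_eq_zero_add, takagi, ← tsum_div_const]
  congr 1
  · norm_num
  · refine tsum_congr fun n => ?_
    rw [Function.iterate_succ_apply]
    ring

lemma takagi_half_mul {u : ℝ} (hu : u ∈ Icc (0:ℝ) 1) :
    takagi (u / 2) = u / 2 + takagi u / 2 := by
  rw [takagi_eq_tent_add ⟨by linarith [hu.1], by linarith [hu.2]⟩, tent_half_mul hu.2]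

lemma takagi_one_add_half_mul {u : ℝ} (hu : u ∈ Icc (0:ℝ) 1) :
    takagi ((1 + u) / 2) = (1 - u) / 2 + takagi u / 2 := by
  have hu' : 1 - u ∈ Icc (0:ℝ) 1 := ⟨by linarith [hu.2], by linarith [hu.1]⟩
  rw [← takagi_one_sub, show 1 - (1 + u) / 2 = (1 - u) / 2 by ring, takagi_half_mul hu',
    takagi_one_sub]

lemma takagi_half_pow (j : ℕ) : takagi ((1/2)^j) = j * (1/2)^j := by
  induction j with
  | zero => simpa using takagi_one
  | succ j ih =>
    have hj : ((1:ℝ)/2)^j ∈ Icc 0 1 :=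
      ⟨by positivity, pow_le_one₀ (by norm_num) (by norm_num)⟩
    rw [pow_succ, ← div_eq_mul_one_div, takagi_half_mul hj, ih]
    push_cast
    ring

lemma takagi_le_of_le_half_pow {j : ℕ} {u : ℝ} (h0 : 0 ≤ u) (h1 : u ≤ (1/2)^j) :
    takagi u ≤ (j + 1) * (1/2)^j := by
  induction j generalizing u with
  | zero => simpa using (takagi_mem_Icc ⟨h0, by simpa using h1⟩).2
  | succ j ih =>
    rw [pow_succ] at h1
    have h2u : 2 * u ≤ (1/2)^j := by linarith
    have h2u' : 2 * u ∈ Icc (0:ℝ) 1 :=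
      ⟨by positivity, h2u.trans (pow_le_one₀ (by norm_num) (by norm_num))⟩
    have := ih (by positivity) h2u
    rw [show u = 2 * u / 2 by ring, takagi_half_mul h2u']
    push_cast
    rw [pow_succ]
    linarith

noncomputable def binVal : List Bool → ℝ
  | [] => 0
  | b :: L => ((if b then 1 else 0) + binVal L) / 2

def binSlope (L : List Bool) : ℝ := L.count false - L.count true

lemma binSlope_eq (L : List Bool) : binSlope L = L.length - 2 * L.count true := by
  rw [binSlope, ← List.count_false_add_count_true]
  push_cast
  ring

lemma binSlope_cons (b : Bool) (L : List Bool) :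
    binSlope (b :: L) = (if b then -1 else 1) + binSlope L := by
  cases b <;> simp [binSlope] <;> ring

lemma abs_binSlope_le (L : List Bool) : |binSlope L| ≤ L.length := by
  rw [binSlope, abs_le, ← List.count_false_add_count_true]
  push_cast
  constructor <;>
    linarith [(L.count false).cast_nonneg (α := ℝ), (L.count true).cast_nonneg (α := ℝ)]

lemma binVal_append (L L' : List Bool) :
    binVal (L ++ L') = binVal L + (1/2)^L.length * binVal L' := by
  induction L with
  | nil => simp [binVal]
  | cons b L ih =>
    rw [List.cons_append, binVal, binVal, ih, List.length_cons, pow_succ]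
    ring

lemma binVal_replicate_false (k : ℕ) : binVal (List.replicate k false) = 0 := by
  induction k with
  | zero => rfl
  | succ k ih => simp [List.replicate_succ, binVal, ih]

lemma binVal_mem_Icc (L : List Bool) : binVal L ∈ Icc 0 (1 - (1/2)^L.length) := by
  induction L with
  | nil => simp [binVal]
  | cons b L ih =>
    obtain ⟨h0, h1⟩ := ih
    rw [binVal, List.length_cons, pow_succ]
    constructor <;> split_ifs <;> linarith

lemma takagi_binVal_add (L : List Bool) {t : ℝ} (h0 : 0 ≤ t) (h1 : t ≤ (1/2)^L.length) :
    takagi (binVal L + t) =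
      takagi (binVal L) + binSlope L * t + (1/2)^L.length * takagi (2^L.length * t) := by
  induction L generalizing t with
  | nil => simp [binVal, binSlope, takagi_zero]
  | cons b L ih =>
    rw [List.length_cons, pow_succ] at h1
    obtain ⟨hv0, hv1⟩ := binVal_mem_Icc L
    have hu : binVal L ∈ Icc (0:ℝ) 1 :=
      ⟨hv0, by linarith [pow_pos (by norm_num : (0:ℝ) < 1/2) L.length]⟩
    have hu' : binVal L + 2 * t ∈ Icc (0:ℝ) 1 := ⟨by linarith, by linarith⟩
    have key := ih (t := 2 * t) (by linarith) (by linarith)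
    rw [← mul_assoc (2 ^ L.length)] at key
    have hsplit : binVal (b :: L) + t = ((if b then 1 else 0) + (binVal L + 2 * t)) / 2 := by
      rw [binVal]; ring
    rw [hsplit, binVal, List.length_cons, pow_succ, pow_succ]
    cases b
    · simp only [Bool.false_eq_true, if_false, zero_add, binSlope_cons]
      rw [takagi_half_mul hu, takagi_half_mul hu', key]
      ring
    · simp only [if_true, binSlope_cons]
      rw [takagi_one_add_half_mul hu, takagi_one_add_half_mul hu', key]
      ring

lemma takagi_binVal_add_half_pow (L : List Bool) :
    takagi (binVal L + (1/2)^L.length) = takagi (binVal L) + binSlope L * (1/2)^L.length := by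
  rw [takagi_binVal_add L (by positivity) le_rfl, ← mul_pow]
  norm_num [takagi_one]

lemma takagi_binVal_add_half_pow_sub_half_pow (L : List Bool) {s : ℕ} (hs : binSlope L = s) :
    takagi (binVal L + (1/2)^L.length - (1/2)^(L.length + s)) =
      takagi (binVal L + (1/2)^L.length) := by
  have hpow : (2:ℝ)^L.length * (1/2)^L.length = 1 := by rw [← mul_pow]; norm_num
  have hle : ((1:ℝ)/2)^(L.length + s) ≤ (1/2)^L.length :=
    pow_le_pow_of_le_one (by norm_num) (by norm_num) (by omega)
  have hpos : (0:ℝ) ≤ (1/2)^(L.length + s) := by positivity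
  have hscale : (2:ℝ)^L.length * ((1/2)^L.length - (1/2)^(L.length + s)) = 1 - (1/2)^s := by
    rw [mul_sub, hpow, pow_add, ← mul_assoc, hpow, one_mul]
  rw [add_sub_assoc, takagi_binVal_add L (by linarith) (by linarith), hscale, takagi_one_sub,
    takagi_half_pow, takagi_binVal_add_half_pow, hs, pow_add]
  ring

lemma abs_takagi_binVal_add_sub_le (L : List Bool) {k : ℕ} (hk : L.length ≤ k) {t : ℝ}
    (h0 : 0 ≤ t) (h1 : t ≤ (1/2)^k) :
    |takagi (binVal L + t) - takagi (binVal L)| ≤ (k + 1) * (1/2)^k := by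
  obtain ⟨j, rfl⟩ : ∃ j, k = L.length + j := ⟨k - L.length, by omega⟩
  have hpow : (2:ℝ)^L.length * (1/2)^(L.length + j) = (1/2)^j := by
    rw [pow_add, ← mul_assoc, ← mul_pow]; norm_num
  have hscaled : 2^L.length * t ≤ (1/2)^j := hpow ▸ by gcongr
  have hT := takagi_mem_Icc
    ⟨by positivity, hscaled.trans (pow_le_one₀ (by norm_num) (by norm_num))⟩
  have hsmall := takagi_le_of_le_half_pow (by positivity) hscaled
  have ht : t ≤ (1/2)^L.length :=
    h1.trans (pow_le_pow_of_le_one (by norm_num) (by norm_num) (by omega))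
  rw [takagi_binVal_add L h0 ht, add_assoc, add_sub_cancel_left]
  calc |binSlope L * t + (1/2)^L.length * takagi (2^L.length * t)|
      ≤ |binSlope L| * t + (1/2)^L.length * takagi (2^L.length * t) := by
        refine (abs_add_le _ _).trans ?_
        rw [abs_mul, abs_of_nonneg h0, abs_of_nonneg (mul_nonneg (by positivity) hT.1)]
    _ ≤ L.length * (1/2)^(L.length + j) + (1/2)^L.length * ((j + 1) * (1/2)^j) := by
        gcongr
        exact abs_binSlope_le L
    _ = (↑(L.length + j) + 1) * (1/2)^(L.length + j) := by
        push_cast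
        ring

lemma summable_half_pow_comp {e : ℕ → ℕ} (he : ∀ m, m ≤ e m) :
    Summable fun m => (1/2:ℝ)^(e m) :=
  .of_nonneg_of_le (fun _ => by positivity)
    (fun m => pow_le_pow_of_le_one (by norm_num) (by norm_num) (he m)) summable_geometric_two

lemma tsum_half_pow_comp_le {e : ℕ → ℕ} {k : ℕ} (he : ∀ m, k + m ≤ e m) :
    ∑' m, (1/2:ℝ)^(e m) ≤ 2 * (1/2)^k := by
  calc ∑' m, (1/2:ℝ)^(e m) ≤ ∑' m, (1/2:ℝ)^k * (1/2)^m :=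
        (summable_half_pow_comp fun m => (Nat.le_add_left m k).trans (he m)).tsum_le_tsum
          (fun m => pow_add (1/2:ℝ) k m ▸
            pow_le_pow_of_le_one (by norm_num) (by norm_num) (he m))
          (summable_geometric_two.mul_left _)
    _ = 2 * (1/2)^k := by rw [tsum_mul_left, tsum_geometric_two, mul_comm]

lemma tendsto_four_pow_succ_atTop : Tendsto (fun n : ℕ => 4^(n+1)) atTop atTop :=
  (tendsto_pow_atTop_atTop_of_one_lt (r := 4) (by norm_num)).comp (tendsto_add_atTop_nat 1)

lemma tendsto_half_pow_four_pow_succ :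
    Tendsto (fun n : ℕ => (1/2:ℝ)^(4^(n+1))) atTop (𝓝 0) :=
  (tendsto_pow_atTop_nhds_zero_of_lt_one (by norm_num) (by norm_num)).comp
    tendsto_four_pow_succ_atTop

lemma four_mul_succ_le_four_pow_succ (n : ℕ) : 4 * (n + 1) ≤ 4^(n+1) := by
  rw [pow_succ, mul_comm]
  exact Nat.mul_le_mul_right 4 (Nat.lt_pow_self (by norm_num))

noncomputable def kruppelApprox (n : ℕ) : ℝ := ∑ m ∈ Finset.range (n+1), (1/2:ℝ)^(4^(m+1))

lemma sub_kruppelApprox_mem_Icc {x : ℝ} (hx : x = ∑' n : ℕ, (1/2 : ℝ)^(4^(n+1))) (n : ℕ) :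
    x - kruppelApprox n ∈ Icc 0 ((1/2)^(3 * 4^(n+1))) := by
  have hsum : Summable fun m : ℕ => (1/2:ℝ)^(4^(m+1)) :=
    summable_half_pow_comp fun m => by have := four_mul_succ_le_four_pow_succ m; omega
  have htail : ∀ m, 4 * 4^(n+1) + m ≤ 4^(m + (n+1) + 1) := by
    intro m
    have h1 : m + 1 ≤ 4^m := Nat.lt_pow_self (by norm_num)
    have h2 : 1 ≤ 4 * 4^(n+1) := Nat.one_le_iff_ne_zero.mpr (by positivity)
    rw [show 4^(m + (n+1) + 1) = 4^m * (4 * 4^(n+1)) by ring]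
    nlinarith
  rw [hx, kruppelApprox, ← hsum.sum_add_tsum_nat_add (n+1), add_sub_cancel_left]
  refine ⟨tsum_nonneg fun _ => by positivity, (tsum_half_pow_comp_le htail).trans ?_⟩
  have hN : (2:ℝ) * (1/2)^(4^(n+1)) ≤ 1 := by
    have := pow_le_pow_of_le_one (by norm_num : (0:ℝ) ≤ 1/2) (by norm_num)
      (Nat.one_le_iff_ne_zero.mpr (by positivity : 4^(n+1) ≠ 0))
    linarith
  calc 2 * (1/2:ℝ)^(4 * 4^(n+1)) = (1/2)^(3 * 4^(n+1)) * (2 * (1/2)^(4^(n+1))) := by ring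
    _ ≤ (1/2)^(3 * 4^(n+1)) := mul_le_of_le_one_right (by positivity) hN

def kruppelDigits : ℕ → List Bool
  | 0 => List.replicate 3 false
  | n + 1 => kruppelDigits n ++ true :: List.replicate (3 * 4^(n+1) - 1) false

lemma length_kruppelDigits_add_one (n : ℕ) : (kruppelDigits n).length + 1 = 4^(n+1) := by
  induction n with
  | zero => rfl
  | succ n ih =>
    have : 1 ≤ 4^(n+1) := Nat.one_le_iff_ne_zero.mpr (by positivity)
    rw [kruppelDigits, List.length_append, List.length_cons, List.length_replicate,
      pow_succ 4 (n+1)]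
    omega

lemma length_kruppelDigits_append (n : ℕ) (b : Bool) :
    (kruppelDigits n ++ [b]).length = 4^(n+1) := by
  rw [List.length_append, List.length_singleton, length_kruppelDigits_add_one]

lemma count_true_kruppelDigits (n : ℕ) : (kruppelDigits n).count true = n := by
  induction n with
  | zero => rfl
  | succ n ih => simp [kruppelDigits, List.count_replicate, ih]

lemma binSlope_kruppelDigits_append (n : ℕ) (b : Bool) :
    binSlope (kruppelDigits n ++ [b]) = 4^(n+1) - 2 * (n + if b then 1 else 0) := by
  rw [binSlope_eq, length_kruppelDigits_append, List.count_append, count_true_kruppelDigits]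
  cases b <;> simp

lemma binVal_kruppelDigits (n : ℕ) :
    binVal (kruppelDigits n) = ∑ m ∈ Finset.range n, (1/2:ℝ)^(4^(m+1)) := by
  induction n with
  | zero => exact binVal_replicate_false 3
  | succ n ih =>
    rw [kruppelDigits, binVal_append, ih, Finset.sum_range_succ, binVal, binVal_replicate_false,
      ← length_kruppelDigits_add_one, pow_succ]
    norm_num

lemma binVal_kruppelDigits_append_true (n : ℕ) :
    binVal (kruppelDigits n ++ [true]) = kruppelApprox n := by
  rw [binVal_append, binVal_kruppelDigits, kruppelApprox, Finset.sum_range_succ,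
    ← length_kruppelDigits_add_one, pow_succ]
  norm_num [binVal]

lemma binVal_kruppelDigits_append_false_add (n : ℕ) :
    binVal (kruppelDigits n ++ [false]) + (1/2)^(4^(n+1)) = kruppelApprox n := by
  rw [binVal_append, binVal_kruppelDigits, kruppelApprox, Finset.sum_range_succ]
  norm_num [binVal]

structure ShrinkingAround (x : ℝ) (z y : ℕ → ℝ) : Prop where
  left_le : ∀ n, z n ≤ x
  le_right : ∀ n, x ≤ y n
  left_lt_right : ∀ n, z n < y n
  tendsto_width : Tendsto (fun n => y n - z n) atTop (𝓝 0)

theorem exists_takagi_secants_tendsto_atTop {x : ℝ}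
    (hx : x = ∑' n : ℕ, (1/2 : ℝ)^(4^(n+1))) :
    ∃ z y : ℕ → ℝ, ShrinkingAround x z y ∧
      Tendsto (fun n => (takagi (y n) - takagi (z n)) / (y n - z n)) atTop atTop := by
  have hr := sub_kruppelApprox_mem_Icc hx
  have hpow (n : ℕ) : (1/2:ℝ)^(3 * 4^(n+1)) ≤ (1/2)^(4^(n+1)) :=
    pow_le_pow_of_le_one (by norm_num) (by norm_num) (by omega)
  refine ⟨kruppelApprox, fun n => kruppelApprox n + (1/2)^(4^(n+1)),
    ⟨fun n => by linarith [(hr n).1], fun n => by linarith [(hr n).2, hpow n],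
      fun n => by simp, by simpa using tendsto_half_pow_four_pow_succ⟩, ?_⟩
  have hslope (n : ℕ) : (takagi (kruppelApprox n + (1/2)^(4^(n+1))) - takagi (kruppelApprox n)) /
      (kruppelApprox n + (1/2)^(4^(n+1)) - kruppelApprox n) = 4^(n+1) - 2 * (n + 1) := by
    have h := takagi_binVal_add_half_pow (kruppelDigits n ++ [true])
    rw [length_kruppelDigits_append, binVal_kruppelDigits_append_true,
      binSlope_kruppelDigits_append] at h
    rw [h, add_sub_cancel_left, add_sub_cancel_left, mul_div_cancel_right₀ _ (by positivity)]
    simp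
  simp_rw [hslope]
  refine tendsto_atTop_mono (fun n => ?_) tendsto_natCast_atTop_atTop
  have h : ((4 * (n + 1) : ℕ) : ℝ) ≤ (4^(n+1) : ℕ) := by
    exact_mod_cast four_mul_succ_le_four_pow_succ n
  push_cast at h
  linarith

noncomputable def kruppelLeft (n : ℕ) : ℝ :=
  kruppelApprox n - (1/2)^(4^(n+1) + (4^(n+1) - 2 * n))

lemma takagi_kruppelLeft (n : ℕ) : takagi (kruppelLeft n) = takagi (kruppelApprox n) := by
  have h2n : 2 * n ≤ 4^(n+1) := by linarith [four_mul_succ_le_four_pow_succ n]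
  have h := takagi_binVal_add_half_pow_sub_half_pow (kruppelDigits n ++ [false])
    (s := 4^(n+1) - 2 * n) (by rw [binSlope_kruppelDigits_append, Nat.cast_sub h2n]; simp)
  rwa [length_kruppelDigits_append, binVal_kruppelDigits_append_false_add] at h

lemma sub_kruppelLeft_mem_Icc {x : ℝ} (hx : x = ∑' n : ℕ, (1/2 : ℝ)^(4^(n+1))) (n : ℕ) :
    x - kruppelLeft n ∈ Icc ((1/2)^(2 * 4^(n+1))) (2 * (1/2)^(4^(n+1))) := by
  have hr := sub_kruppelApprox_mem_Icc hx n
  have h₁ : (1/2:ℝ)^(2 * 4^(n+1)) ≤ (1/2)^(4^(n+1) + (4^(n+1) - 2 * n)) :=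
    pow_le_pow_of_le_one (by norm_num) (by norm_num) (by omega)
  have h₂ : (1/2:ℝ)^(4^(n+1) + (4^(n+1) - 2 * n)) ≤ (1/2)^(4^(n+1)) :=
    pow_le_pow_of_le_one (by norm_num) (by norm_num) (by omega)
  have h₃ : (1/2:ℝ)^(3 * 4^(n+1)) ≤ (1/2)^(4^(n+1)) :=
    pow_le_pow_of_le_one (by norm_num) (by norm_num) (by omega)
  rw [kruppelLeft, ← sub_add]
  constructor <;> linarith [hr.1, hr.2]

lemma abs_takagi_sub_takagi_kruppelApprox_le {x : ℝ}
    (hx : x = ∑' n : ℕ, (1/2 : ℝ)^(4^(n+1))) (n : ℕ) :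
    |takagi x - takagi (kruppelApprox n)| ≤ (3 * 4^(n+1) + 1) * (1/2)^(3 * 4^(n+1)) := by
  have hr := sub_kruppelApprox_mem_Icc hx n
  have h := abs_takagi_binVal_add_sub_le (kruppelDigits n ++ [true]) (k := 3 * 4^(n+1))
    (by rw [length_kruppelDigits_append]; omega) hr.1 hr.2
  rw [binVal_kruppelDigits_append_true, add_sub_cancel] at h
  exact_mod_cast h

lemma abs_takagi_slope_kruppelLeft_le {x : ℝ} (hx : x = ∑' n : ℕ, (1/2 : ℝ)^(4^(n+1)))
    (n : ℕ) :
    |(takagi x - takagi (kruppelLeft n)) / (x - kruppelLeft n)|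
      ≤ 4 * ((4^(n+1) : ℕ) * (1/2:ℝ)^(4^(n+1))) := by
  have hgap := (sub_kruppelLeft_mem_Icc hx n).1
  have hpos : (0:ℝ) < (1/2)^(2 * 4^(n+1)) := by positivity
  rw [abs_div, abs_of_pos (hpos.trans_le hgap), takagi_kruppelLeft]
  calc |takagi x - takagi (kruppelApprox n)| / (x - kruppelLeft n)
      ≤ (3 * 4^(n+1) + 1) * (1/2)^(3 * 4^(n+1)) / (1/2)^(2 * 4^(n+1)) :=
        div_le_div₀ (by positivity) (abs_takagi_sub_takagi_kruppelApprox_le hx n) hpos hgap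
    _ = (3 * 4^(n+1) + 1) * (1/2)^(4^(n+1)) := by
        rw [show 3 * 4^(n+1) = 4^(n+1) + 2 * 4^(n+1) by ring, pow_add (1/2:ℝ), mul_div_assoc,
          mul_div_cancel_right₀ _ hpos.ne']
    _ ≤ 4 * ((4^(n+1) : ℕ) * (1/2:ℝ)^(4^(n+1))) := by
        have : (1:ℝ) ≤ 4^(n+1) := one_le_pow₀ (by norm_num)
        push_cast
        nlinarith [pow_pos (by norm_num : (0:ℝ) < 1/2) (4^(n+1))]

theorem exists_takagi_secants_tendsto_zero {x : ℝ}
    (hx : x = ∑' n : ℕ, (1/2 : ℝ)^(4^(n+1))) :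
    ∃ z y : ℕ → ℝ, ShrinkingAround x z y ∧
      Tendsto (fun n => (takagi (y n) - takagi (z n)) / (y n - z n)) atTop (𝓝 0) := by
  have hgap := sub_kruppelLeft_mem_Icc hx
  have hgap_pos (n : ℕ) : 0 < x - kruppelLeft n := lt_of_lt_of_le (by positivity) (hgap n).1
  refine ⟨kruppelLeft, fun _ => x, ⟨fun n => ?_, fun _ => le_rfl, fun n => ?_, ?_⟩, ?_⟩
  · linarith [hgap_pos n]
  · linarith [hgap_pos n]
  · exact squeeze_zero (fun n => (hgap_pos n).le) (fun n => (hgap n).2)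
      (by simpa using tendsto_half_pow_four_pow_succ.const_mul 2)
  · refine squeeze_zero_norm
      (fun n => (Real.norm_eq_abs _).trans_le (abs_takagi_slope_kruppelLeft_le hx n)) ?_
    simpa using ((tendsto_self_mul_const_pow_of_lt_one (r := 1/2) (by norm_num)
      (by norm_num)).comp tendsto_four_pow_succ_atTop).const_mul 4

/-- For `x = ∑ 2^{-4^n}`, the secant slopes over shrinking intervals containing `x`
do not tend to a common limit in the extended reals: `T` has no derivative at `x`,
even in the improper infinite sense. -/
theorem takagi_no_improper_derivative_at_kruppel_point
    (x : ℝ) (hx : x = ∑' n : ℕ, (1/2 : ℝ)^(4^(n+1))) :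
    ¬ ∃ L : EReal, ∀ z y : ℕ → ℝ,
      (∀ n, z n ≤ x) → (∀ n, x ≤ y n) → (∀ n, z n < y n) →
      Tendsto (fun n => y n - z n) atTop (𝓝 0) →
      Tendsto (fun n => (((takagi (y n) - takagi (z n)) / (y n - z n) : ℝ) : EReal))
        atTop (𝓝 L) := by
  rintro ⟨L, hL⟩
  have hL' {z y : ℕ → ℝ} (h : ShrinkingAround x z y) :=
    hL z y h.left_le h.le_right h.left_lt_right h.tendsto_width
  obtain ⟨z₁, y₁, h₁, hslope₁⟩ := exists_takagi_secants_tendsto_atTop hx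
  obtain ⟨z₂, y₂, h₂, hslope₂⟩ := exists_takagi_secants_tendsto_zero hx
  have htop : L = ⊤ :=
    tendsto_nhds_unique (hL' h₁) (EReal.tendsto_coe_nhds_top_iff.mpr hslope₁)
  have hzero : L = (0 : ℝ) := tendsto_nhds_unique (hL' h₂) (EReal.tendsto_coe.mpr hslope₂)
  exact EReal.coe_ne_top 0 (hzero.symm.trans htop)
end

section
/- Let x ∈ (0,1) be non-dyadic with binary digits (ε_k) such that d_1(x) := lim_{n→∞} (1/n) Σ_{k=1}^n ε_k exists and 0 < d_1(x) < 1/2. Then T'(x) = +∞, where T is the Takagi function. -/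
open Filter Topology Set

def IsDyadic (x : ℝ) : Prop := ∃ k : ℤ, ∃ m : ℕ, x = (k : ℝ) / 2^m

/-- The `k`-th binary digit of `x` (for `k ≥ 1`), using the terminating expansion
for dyadic rationals. -/
noncomputable def binDigit (x : ℝ) (k : ℕ) : ℕ := ⌊x * 2^k⌋.toNat % 2

/-!
Write `takagi x = ∑ₖ dist(2ᵏx, ℤ) / 2ᵏ`. On a dyadic interval `[N/2ⁿ, (N+1)/2ⁿ]` the first `n`
terms are affine with total slope `n - 2·(number of ones of N in binary)`, and the remaining terms
sum to at most `2⁻ⁿ`. For `|h| ≈ 2⁻ⁿ`, the segment from `x` to `x + h` meets the interval of `x`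
(where the slope is `n - 2 Bₙ`, with `Bₙ` the number of ones among the first `n` digits of `x`)
and a neighbour. To the right, `N + 1` has at most one more binary one than `N`, so the slope is
at least `n - 2 Bₙ - 2 ≈ (1 - 2d) n`. To the left, `N - 1` turns the `t` trailing zeros of `N`
into ones; all `Bₙ` ones of `x` then lie among its first `L = n - t` digits, so `d > 0` forces
`L ≈ n`, and the slope `2 L - n - 2 Bₙ` again grows like `(1 - 2d) n`.
-/

noncomputable def distToInt (y : ℝ) : ℝ := min (Int.fract y) (1 - Int.fract y)

lemma distToInt_nonneg (y : ℝ) : 0 ≤ distToInt y :=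
  le_min (Int.fract_nonneg y) (by linarith [Int.fract_lt_one y])

lemma distToInt_le_half (y : ℝ) : distToInt y ≤ 1 / 2 := by
  unfold distToInt
  rcases le_total (Int.fract y) (1 / 2) with h | h
  · exact min_le_of_left_le h
  · exact min_le_of_right_le (by linarith)

lemma distToInt_add_intCast (y : ℝ) (m : ℤ) : distToInt (y + m) = distToInt y := by
  rw [distToInt, Int.fract_add_intCast, distToInt]

lemma distToInt_neg (y : ℝ) : distToInt (-y) = distToInt y := by
  unfold distToInt
  rcases eq_or_ne (Int.fract y) 0 with h | h
  · rw [Int.fract_neg_eq_zero.2 h, h]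
  · rw [Int.fract_neg h, min_comm]
    ring_nf

lemma distToInt_two_mul_distToInt (y : ℝ) :
    distToInt (2 * distToInt y) = distToInt (2 * y) := by
  have hy : 2 * y = 2 * Int.fract y + ((2 * ⌊y⌋ : ℤ) : ℝ) := by
    push_cast
    linarith [Int.fract_add_floor y]
  rw [hy, distToInt_add_intCast]
  rcases min_choice (Int.fract y) (1 - Int.fract y) with h | h <;>
    rw [show distToInt y = _ from h]
  rw [← distToInt_neg, show -(2 * (1 - Int.fract y)) = 2 * Int.fract y + ((-2 : ℤ) : ℝ) by
    push_cast; ring, distToInt_add_intCast]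

lemma distToInt_eq_sub_intCast {m : ℤ} {y : ℝ} (hy : y ∈ Icc (m : ℝ) (m + 1 / 2)) :
    distToInt y = y - m := by
  have hfl : ⌊y⌋ = m := Int.floor_eq_iff.2 ⟨hy.1, by linarith [hy.2]⟩
  rw [distToInt, Int.fract, hfl, min_eq_left (by linarith [hy.2])]

lemma distToInt_eq_intCast_add_one_sub {m : ℤ} {y : ℝ} (hy : y ∈ Icc ((m : ℝ) + 1 / 2) (m + 1)) :
    distToInt y = m + 1 - y := by
  rcases hy.2.lt_or_eq with h | h
  · have hfl : ⌊y⌋ = m := Int.floor_eq_iff.2 ⟨by linarith [hy.1], h⟩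
    rw [distToInt, Int.fract, hfl, min_eq_right (by linarith [hy.1])]
    ring
  · rw [h, show (m : ℝ) + 1 = ((m + 1 : ℤ) : ℝ) by push_cast; ring]
    simp [distToInt]

lemma distToInt_sub_of_two_mul_mem_Icc (J : ℕ) {s t : ℝ} (hs : 2 * s ∈ Icc (J : ℝ) (J + 1))
    (ht : 2 * t ∈ Icc (J : ℝ) (J + 1)) :
    distToInt t - distToInt s = (1 - 2 * (J % 2 : ℕ)) * (t - s) := by
  obtain ⟨m, rfl | rfl⟩ := Nat.even_or_odd' J
  · have hmem : ∀ y : ℝ, 2 * y ∈ Icc ((2 * m : ℕ) : ℝ) ((2 * m : ℕ) + 1) →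
        y ∈ Icc ((m : ℤ) : ℝ) (m + 1 / 2) := fun y hy => by
      push_cast at hy ⊢; constructor <;> linarith [hy.1, hy.2]
    rw [distToInt_eq_sub_intCast (hmem t ht), distToInt_eq_sub_intCast (hmem s hs)]
    simp
  · have hmem : ∀ y : ℝ, 2 * y ∈ Icc ((2 * m + 1 : ℕ) : ℝ) ((2 * m + 1 : ℕ) + 1) →
        y ∈ Icc ((m : ℤ) + 1 / 2 : ℝ) (m + 1) := fun y hy => by
      push_cast at hy ⊢; constructor <;> linarith [hy.1, hy.2]
    rw [distToInt_eq_intCast_add_one_sub (hmem t ht), distToInt_eq_intCast_add_one_sub (hmem s hs)]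
    simp only [Int.cast_natCast, sub_sub_sub_cancel_left, Nat.add_mod, Nat.mul_mod_right,
      Nat.mod_succ, zero_add, Nat.cast_one, mul_one]
    ring

lemma tent_eq_two_mul_distToInt {x : ℝ} (hx : x ∈ Icc (0 : ℝ) 1) : tent x = 2 * distToInt x := by
  rcases hx.2.lt_or_eq with h | rfl
  · rw [tent, distToInt, Int.fract_eq_self.2 ⟨hx.1, h⟩]
    rcases le_total x (1 - x) with h' | h'
    · rw [min_eq_left h', min_eq_left (by linarith)]
    · rw [min_eq_right h', min_eq_right (by linarith)]
      ring
  · norm_num [tent, distToInt]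

lemma tent_iterate_succ {x : ℝ} (hx : x ∈ Icc (0 : ℝ) 1) (n : ℕ) :
    tent^[n + 1] x = 2 * distToInt (x * 2 ^ n) := by
  induction n with
  | zero => simpa using tent_eq_two_mul_distToInt hx
  | succ n ih =>
    have hmem : 2 * distToInt (x * 2 ^ n) ∈ Icc (0 : ℝ) 1 :=
      ⟨by linarith [distToInt_nonneg (x * 2 ^ n)], by linarith [distToInt_le_half (x * 2 ^ n)]⟩
    rw [Function.iterate_succ_apply', ih, tent_eq_two_mul_distToInt hmem,
      distToInt_two_mul_distToInt, pow_succ]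
    ring_nf

noncomputable def partialTakagi (n : ℕ) (y : ℝ) : ℝ :=
  ∑ k ∈ Finset.range n, distToInt (y * 2 ^ k) / 2 ^ k

lemma takagi_eq_tsum_distToInt {y : ℝ} (hy : y ∈ Icc (0 : ℝ) 1) :
    takagi y = ∑' k : ℕ, distToInt (y * 2 ^ k) / 2 ^ k := by
  refine tsum_congr fun k => ?_
  rw [tent_iterate_succ hy, pow_succ]
  field_simp

lemma distToInt_div_two_pow_le (y : ℝ) (k : ℕ) :
    distToInt (y * 2 ^ k) / 2 ^ k ≤ 1 / 2 / 2 ^ k :=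
  div_le_div_of_nonneg_right (distToInt_le_half _) (by positivity)

lemma summable_distToInt_div_two_pow (y : ℝ) :
    Summable fun k : ℕ => distToInt (y * 2 ^ k) / 2 ^ k := by
  refine Summable.of_nonneg_of_le (fun k => by positivity [distToInt_nonneg (y * 2 ^ k)])
    (distToInt_div_two_pow_le y) ?_
  simpa [div_eq_mul_inv] using summable_geometric_two.mul_left (2⁻¹ : ℝ)

lemma takagi_mem_Icc_partialTakagi {y : ℝ} (hy : y ∈ Icc (0 : ℝ) 1) (n : ℕ) :
    takagi y ∈ Icc (partialTakagi n y) (partialTakagi n y + (1 / 2) ^ n) := by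
  have hs := summable_distToInt_div_two_pow y
  rw [takagi_eq_tsum_distToInt hy, ← hs.sum_add_tsum_nat_add n, partialTakagi]
  have htail : ∑' k : ℕ, distToInt (y * 2 ^ (k + n)) / 2 ^ (k + n) ≤ (1 / 2) ^ n := by
    calc ∑' k : ℕ, distToInt (y * 2 ^ (k + n)) / 2 ^ (k + n)
        ≤ ∑' k : ℕ, (1 / 2) ^ n / 2 / 2 ^ k := by
          refine (hs.comp_injective (add_left_injective n)).tsum_le_tsum (fun k => ?_)
            ((summable_geometric_two.mul_left ((1 / 2) ^ n / 2)).congr fun k => by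
              simp [div_eq_mul_inv])
          refine (distToInt_div_two_pow_le y (k + n)).trans_eq ?_
          rw [pow_add, div_pow, one_pow]
          field_simp
      _ = (1 / 2) ^ n := tsum_geometric_two' _
  exact ⟨le_add_of_nonneg_right (tsum_nonneg fun k => by
    positivity [distToInt_nonneg (y * 2 ^ (k + n))]), by gcongr⟩

lemma partialTakagi_sub_le_takagi_sub {u v : ℝ} (hu : u ∈ Icc (0 : ℝ) 1)
    (hv : v ∈ Icc (0 : ℝ) 1) (n : ℕ) :
    partialTakagi n v - partialTakagi n u - (1 / 2) ^ n ≤ takagi v - takagi u := by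
  linarith [(takagi_mem_Icc_partialTakagi hu n).2, (takagi_mem_Icc_partialTakagi hv n).1]

def bitCount (n N : ℕ) : ℕ := ∑ i ∈ Finset.range n, N / 2 ^ i % 2

lemma bitCount_succ (n N : ℕ) : bitCount (n + 1) N = N % 2 + bitCount n (N / 2) := by
  simp only [bitCount, Finset.sum_range_succ', pow_succ', ← Nat.div_div_eq_div_mul, pow_zero,
    Nat.div_one]
  ring

lemma bitCount_succ_le (n N : ℕ) : bitCount n (N + 1) ≤ bitCount n N + 1 := by
  induction n generalizing N with
  | zero => simp [bitCount]
  | succ n ih =>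
    rw [bitCount_succ, bitCount_succ]
    obtain ⟨M, rfl | rfl⟩ := Nat.even_or_odd' N
    · rw [show (2 * M + 1) / 2 = 2 * M / 2 by omega]
      omega
    · rw [show (2 * M + 1 + 1) / 2 = (2 * M + 1) / 2 + 1 by omega]
      have := ih ((2 * M + 1) / 2)
      omega

/-- Here `t` is the number of trailing zeros of `N`, which become ones in `N - 1`. -/
lemma exists_bitCount_pred {n N : ℕ} (hN : 0 < N) (hNn : N < 2 ^ n) :
    ∃ t ≤ n, bitCount n (N - 1) + 1 ≤ bitCount n N + t ∧
      bitCount (n - t) (N / 2 ^ t) = bitCount n N := by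
  induction n generalizing N with
  | zero => omega
  | succ n ih =>
    obtain ⟨M, rfl | rfl⟩ := Nat.even_or_odd' N
    · obtain ⟨t, htn, hpred, hhigh⟩ := ih (N := M) (by omega) (by rw [pow_succ] at hNn; omega)
      refine ⟨t + 1, by omega, ?_, ?_⟩
      · rw [bitCount_succ, bitCount_succ, show (2 * M - 1) / 2 = M - 1 by omega,
          show 2 * M / 2 = M by omega]
        omega
      · rw [show n + 1 - (t + 1) = n - t by omega, pow_succ', ← Nat.div_div_eq_div_mul,
          show 2 * M / 2 = M by omega, hhigh, bitCount_succ, show 2 * M / 2 = M by omega]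
        omega
    · refine ⟨0, by omega, ?_, by simp⟩
      rw [bitCount_succ, bitCount_succ, show (2 * M + 1 - 1) / 2 = (2 * M + 1) / 2 by omega]
      omega

def dyadicCell (n N : ℕ) : Set ℝ := {y | y * 2 ^ n ∈ Icc (N : ℝ) (N + 1)}

lemma dyadicCell_subset {m n : ℕ} (hmn : m ≤ n) (N : ℕ) :
    dyadicCell n N ⊆ dyadicCell m (N / 2 ^ (n - m)) := by
  intro y ⟨hlo, hhi⟩
  have hp : (0 : ℝ) < 2 ^ (n - m) := by positivity
  have hy : y * 2 ^ n = y * 2 ^ m * 2 ^ (n - m) := by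
    rw [mul_assoc, ← pow_add, Nat.add_sub_cancel' hmn]
  have hdiv : ((N / 2 ^ (n - m) * 2 ^ (n - m) : ℕ) : ℝ) ≤ N :=
    Nat.cast_le.2 (Nat.div_mul_le_self _ _)
  have hmod : (N + 1 : ℝ) ≤ ((N / 2 ^ (n - m) * 2 ^ (n - m) + 2 ^ (n - m) : ℕ) : ℝ) := by
    exact_mod_cast Nat.lt_div_mul_add (by positivity)
  push_cast at hdiv hmod
  constructor
  · exact le_of_mul_le_mul_right (by nlinarith) hp
  · exact le_of_mul_le_mul_right (by nlinarith) hp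

lemma floor_mul_two_pow_div (x : ℝ) {m n : ℕ} (hmn : m ≤ n) :
    ⌊x * 2 ^ n⌋₊ / 2 ^ (n - m) = ⌊x * 2 ^ m⌋₊ := by
  rw [← Nat.floor_div_natCast]
  congr 1
  push_cast
  rw [← Nat.add_sub_cancel' hmn, pow_add, Nat.add_sub_cancel_left]
  field_simp

noncomputable def digitSum (x : ℝ) (n : ℕ) : ℕ := ∑ k ∈ Finset.range n, binDigit x (k + 1)

lemma digitSum_eq_bitCount (x : ℝ) (n : ℕ) : digitSum x n = bitCount n ⌊x * 2 ^ n⌋₊ := by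
  rw [digitSum, bitCount, ← Finset.sum_range_reflect (fun i => ⌊x * 2 ^ n⌋₊ / 2 ^ i % 2)]
  refine Finset.sum_congr rfl fun k hk => ?_
  rw [binDigit, Int.floor_toNat, ← floor_mul_two_pow_div x (Finset.mem_range.1 hk),
    show n - (k + 1) = n - 1 - k by omega]

def cellSlope (n N : ℕ) : ℝ := n - 2 * bitCount n N

lemma partialTakagi_sub_of_mem_dyadicCell {n N : ℕ} {y z : ℝ} (hy : y ∈ dyadicCell n N)
    (hz : z ∈ dyadicCell n N) :
    partialTakagi n z - partialTakagi n y = cellSlope n N * (z - y) := by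
  have hterm : ∀ k ∈ Finset.range n,
      distToInt (z * 2 ^ k) / 2 ^ k - distToInt (y * 2 ^ k) / 2 ^ k
        = (1 - 2 * (N / 2 ^ (n - 1 - k) % 2 : ℕ)) * (z - y) := by
    intro k hk
    have hmem : ∀ w ∈ dyadicCell n N, 2 * (w * 2 ^ k) ∈
        Icc ((N / 2 ^ (n - 1 - k) : ℕ) : ℝ) ((N / 2 ^ (n - 1 - k) : ℕ) + 1) := fun w hw => by
      have h : w * 2 ^ (k + 1) ∈ Icc ((N / 2 ^ (n - (k + 1)) : ℕ) : ℝ) _ :=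
        dyadicCell_subset (Finset.mem_range.1 hk) N hw
      rwa [show n - (k + 1) = n - 1 - k by omega, pow_succ, ← mul_assoc, mul_comm] at h
    rw [← sub_div, distToInt_sub_of_two_mul_mem_Icc _ (hmem y hy) (hmem z hz)]
    field_simp
  rw [partialTakagi, partialTakagi, ← Finset.sum_sub_distrib, Finset.sum_congr rfl hterm,
    ← Finset.sum_mul, cellSlope, bitCount, ← Finset.sum_range_reflect (fun i => N / 2 ^ i % 2)]
  push_cast
  rw [Finset.sum_sub_distrib, ← Finset.mul_sum]
  simp

lemma min_cellSlope_mul_le_partialTakagi_sub {n N : ℕ} {u v : ℝ} (huv : u ≤ v)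
    (hu : (N : ℝ) ≤ u * 2 ^ n) (hv : v * 2 ^ n ≤ N + 2) :
    min (cellSlope n N) (cellSlope n (N + 1)) * (v - u) ≤
      partialTakagi n v - partialTakagi n u := by
  have h2n : (0 : ℝ) < 2 ^ n := by positivity
  have hscale : ∀ {s t : ℝ}, s ≤ t → s * 2 ^ n ≤ t * 2 ^ n := fun h =>
    mul_le_mul_of_nonneg_right h h2n.le
  set a : ℝ := (N + 1) / 2 ^ n
  have ha : a * 2 ^ n = N + 1 := div_mul_cancel₀ _ h2n.ne'
  have hmin := min_le_left (cellSlope n N) (cellSlope n (N + 1))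
  have hmin' := min_le_right (cellSlope n N) (cellSlope n (N + 1))
  have hcell : ∀ {w}, u ≤ w → w ≤ a → w ∈ dyadicCell n N := fun huw hwa =>
    ⟨hu.trans (hscale huw), ha ▸ hscale hwa⟩
  have hcell' : ∀ {w}, a ≤ w → w ≤ v → w ∈ dyadicCell n (N + 1) := fun haw hwv => by
    refine ⟨?_, ?_⟩ <;> push_cast
    · exact ha ▸ hscale haw
    · linarith [hscale hwv]
  rcases le_total v a with hva | hav
  · rw [partialTakagi_sub_of_mem_dyadicCell (hcell le_rfl (huv.trans hva)) (hcell huv hva)]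
    exact mul_le_mul_of_nonneg_right hmin (sub_nonneg.2 huv)
  rcases le_total a u with hau | hua
  · rw [partialTakagi_sub_of_mem_dyadicCell (hcell' hau huv) (hcell' (hau.trans huv) le_rfl)]
    exact mul_le_mul_of_nonneg_right hmin' (sub_nonneg.2 huv)
  have hleft := partialTakagi_sub_of_mem_dyadicCell (hcell le_rfl hua) (hcell hua le_rfl)
  have hright := partialTakagi_sub_of_mem_dyadicCell (hcell' le_rfl hav) (hcell' hav le_rfl)
  nlinarith [mul_le_mul_of_nonneg_right hmin (sub_nonneg.2 hua),
    mul_le_mul_of_nonneg_right hmin' (sub_nonneg.2 hav)]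

lemma min_cellSlope_mul_sub_le_takagi_sub {n N : ℕ} {u v : ℝ} (hu0 : 0 ≤ u) (hv1 : v ≤ 1)
    (huv : u ≤ v) (hu : (N : ℝ) ≤ u * 2 ^ n) (hv : v * 2 ^ n ≤ N + 2) :
    min (cellSlope n N) (cellSlope n (N + 1)) * (v - u) - (1 / 2) ^ n ≤ takagi v - takagi u :=
  (sub_le_sub_right (min_cellSlope_mul_le_partialTakagi_sub huv hu hv) _).trans
    (partialTakagi_sub_le_takagi_sub ⟨hu0, huv.trans hv1⟩ ⟨hu0.trans huv, hv1⟩ n)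

lemma sub_le_takagi_slope_right {x h : ℝ} {n : ℕ} (hx : 0 ≤ x) (hxh : x + h ≤ 1)
    (hh : (1 / 2) ^ (n + 1) ≤ h) (hhn : h ≤ (1 / 2) ^ n) :
    (n : ℝ) - 2 * digitSum x n - 4 ≤ (takagi (x + h) - takagi x) / h := by
  have hpos : 0 < h := lt_of_lt_of_le (by positivity) hh
  have hscale : (1 / 2 : ℝ) ^ n * 2 ^ n = 1 := by simp
  rw [digitSum_eq_bitCount, le_div_iff₀ hpos]
  set N := ⌊x * 2 ^ n⌋₊
  have hN : (N : ℝ) ≤ x * 2 ^ n := Nat.floor_le (by positivity)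
  have hN' : x * 2 ^ n < N + 1 := Nat.lt_floor_add_one _
  have hstep := min_cellSlope_mul_sub_le_takagi_sub hx hxh (le_add_of_nonneg_right hpos.le) hN
    (by nlinarith [hscale])
  have hcarry : (bitCount n (N + 1) : ℝ) ≤ bitCount n N + 1 := by
    exact_mod_cast bitCount_succ_le n N
  have hmin : (n : ℝ) - 2 * bitCount n N - 2 ≤ min (cellSlope n N) (cellSlope n (N + 1)) := by
    unfold cellSlope
    exact le_min (by linarith) (by linarith)
  have htail : (1 / 2 : ℝ) ^ n ≤ 2 * h := by rw [pow_succ] at hh; linarith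
  rw [add_sub_cancel_left] at hstep
  linarith [mul_le_mul_of_nonneg_right hmin hpos.le]

lemma exists_le_takagi_slope_left {x h : ℝ} {n : ℕ} (hx : (1 / 2) ^ n ≤ x) (hx1 : x < 1)
    (hh : (1 / 2) ^ (n + 1) ≤ h) (hhn : h ≤ (1 / 2) ^ n) :
    ∃ L, digitSum x L = digitSum x n ∧
      2 * (L : ℝ) - n - 2 * digitSum x n - 2 ≤ (takagi x - takagi (x - h)) / h := by
  have hpos : 0 < h := lt_of_lt_of_le (by positivity) hh
  have hscale : (1 / 2 : ℝ) ^ n * 2 ^ n = 1 := by simp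
  have hx0 : 0 ≤ x * 2 ^ n := mul_nonneg ((hpos.trans_le hhn).le.trans hx) (by positivity)
  have hx2n : 1 ≤ x * 2 ^ n := by nlinarith [hscale]
  set N := ⌊x * 2 ^ n⌋₊
  have hN : (N : ℝ) ≤ x * 2 ^ n := Nat.floor_le hx0
  have hN' : x * 2 ^ n < N + 1 := Nat.lt_floor_add_one _
  have hN0 : 0 < N := Nat.floor_pos.2 hx2n
  have hNn : N < 2 ^ n := (Nat.floor_lt hx0).2 (by push_cast; nlinarith)
  obtain ⟨t, htn, hpred, hhigh⟩ := exists_bitCount_pred hN0 hNn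
  refine ⟨n - t, ?_, ?_⟩
  · rw [digitSum_eq_bitCount, digitSum_eq_bitCount, ← floor_mul_two_pow_div x (Nat.sub_le n t),
      Nat.sub_sub_self htn, hhigh]
  have hstep := min_cellSlope_mul_sub_le_takagi_sub (N := N - 1) (u := x - h) (v := x)
    (by nlinarith [hscale]) hx1.le (by linarith)
    (by push_cast [Nat.cast_pred hN0]; nlinarith [hscale])
    (by push_cast [Nat.cast_pred hN0]; linarith)
  rw [Nat.sub_add_cancel hN0, sub_sub_cancel] at hstep
  have hpred' : (bitCount n (N - 1) : ℝ) + 1 ≤ bitCount n N + t := by exact_mod_cast hpred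
  have hmin : 2 * ((n - t : ℕ) : ℝ) - n - 2 * bitCount n N ≤
      min (cellSlope n (N - 1)) (cellSlope n N) := by
    unfold cellSlope
    push_cast [Nat.cast_sub htn]
    exact le_min (by linarith) (by linarith [(Nat.cast_nonneg t : (0 : ℝ) ≤ t)])
  have htail : (1 / 2 : ℝ) ^ n ≤ 2 * h := by rw [pow_succ] at hh; linarith
  rw [digitSum_eq_bitCount, le_div_iff₀ hpos]
  linarith [mul_le_mul_of_nonneg_right hmin hpos.le]

lemma exists_le_takagi_slope {x e : ℝ} {n : ℕ} (hx : (1 / 2) ^ n ≤ x) (hx' : (1 / 2) ^ n ≤ 1 - x)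
    (he : e ≠ 0) (hen : (1 / 2) ^ (n + 1) ≤ |e|) (hen' : |e| ≤ (1 / 2) ^ n) :
    ∃ L, digitSum x L = digitSum x n ∧
      2 * (L : ℝ) - n - 2 * digitSum x n - 4 ≤ (takagi (x + e) - takagi x) / e := by
  have hpow : (0 : ℝ) < (1 / 2) ^ n := by positivity
  rcases he.lt_or_gt with hneg | hpos
  · rw [abs_of_neg hneg] at hen hen'
    obtain ⟨L, hL, hbound⟩ := exists_le_takagi_slope_left hx (by linarith) hen hen'
    rw [sub_neg_eq_add, ← neg_sub (takagi (x + e)), neg_div_neg_eq] at hbound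
    exact ⟨L, hL, by linarith⟩
  · rw [abs_of_pos hpos] at hen hen'
    have hright := sub_le_takagi_slope_right (hpow.le.trans hx) (by linarith) hen hen'
    exact ⟨n, rfl, by linarith⟩

/-- The least `L` with `B L = B n` satisfies `L / B n → 1 / d`, like `n / B n`. -/
lemma eventually_le_two_mul_sub {B : ℕ → ℕ} {d : ℝ} (hd0 : 0 < d) (hd12 : d < 1 / 2)
    (hB : Tendsto (fun n => (B n : ℝ) / n) atTop (𝓝 d)) (C : ℝ) :
    ∀ᶠ n in atTop, ∀ L, B L = B n → C ≤ 2 * (L : ℝ) - n - 2 * B n := by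
  classical
  have hBtop : Tendsto (fun n => (B n : ℝ)) atTop atTop := by
    refine (tendsto_natCast_atTop_atTop.atTop_mul_pos hd0 hB).congr' ?_
    filter_upwards [eventually_ne_atTop 0] with n hn
    field_simp
  let ℓ : ℕ → ℕ := fun n => Nat.find (⟨n, rfl⟩ : ∃ L, B L = B n)
  have hBℓ : ∀ n, B (ℓ n) = B n := fun n => Nat.find_spec (⟨n, rfl⟩ : ∃ L, B L = B n)
  have hℓ : Tendsto ℓ atTop atTop := by
    refine tendsto_atTop.2 fun M => ?_
    have hbig : ∀ᶠ n in atTop, ∀ m ∈ Finset.range M, (B m : ℝ) < B n :=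
      (eventually_all_finset _).2 fun m _ => hBtop.eventually_gt_atTop _
    filter_upwards [hbig] with n hn
    by_contra hlt
    exact (hn (ℓ n) (Finset.mem_range.2 (not_le.1 hlt))).ne (by rw [hBℓ])
  have hℓB : Tendsto (fun n => (ℓ n : ℝ) / B n) atTop (𝓝 d⁻¹) := by
    simpa only [Function.comp_def, hBℓ, inv_div] using (hB.comp hℓ).inv₀ hd0.ne'
  have hnB : Tendsto (fun n : ℕ => (n : ℝ) / B n) atTop (𝓝 d⁻¹) := by
    simpa only [inv_div] using hB.inv₀ hd0.ne'
  have hpos : 0 < 2 * d⁻¹ - d⁻¹ - 2 := by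
    have : 2 < d⁻¹ := by rw [lt_inv_comm₀ (by norm_num) hd0]; linarith
    linarith
  have hlim := ((hℓB.const_mul 2).sub hnB).sub_const 2
  have htop := (hBtop.atTop_mul_pos hpos hlim).congr'
    (f₂ := fun n : ℕ => 2 * (ℓ n : ℝ) - n - 2 * B n) (by
      filter_upwards [hBtop.eventually_gt_atTop 0] with n hn
      field_simp)
  filter_upwards [htop.eventually_ge_atTop C] with n hn L hL
  have : (ℓ n : ℝ) ≤ L := by exact_mod_cast Nat.find_min' (⟨n, rfl⟩ : ∃ L', B L' = B n) hL
  linarith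

lemma eventually_exists_half_pow_near {a : ℝ} (ha : 0 < a) :
    ∀ᶠ e in 𝓝[≠] (0 : ℝ), ∃ n : ℕ, (1 / 2 : ℝ) ^ n ≤ a ∧ (1 / 2) ^ (n + 1) ≤ |e| ∧
      |e| ≤ (1 / 2) ^ n := by
  have hsmall : ∀ᶠ e in 𝓝 (0 : ℝ), |e| < min (a / 2) 1 := by
    simpa using eventually_abs_sub_lt (0 : ℝ) (lt_min (half_pos ha) one_pos)
  filter_upwards [nhdsWithin_le_nhds hsmall, self_mem_nhdsWithin] with e he hne
  obtain ⟨n, hlo, hhi⟩ := exists_nat_pow_near_of_lt_one (abs_pos.2 hne)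
    (he.le.trans (min_le_right _ _)) (by norm_num : (0 : ℝ) < 1 / 2) (by norm_num)
  refine ⟨n, ?_, hlo.le, hhi⟩
  rw [pow_succ] at hlo
  linarith [min_le_left (a / 2) 1]

theorem takagi_deriv_top_of_density_general
    (x : ℝ) (hx : x ∈ Set.Ioo (0:ℝ) 1)
    (d : ℝ)
    (hd : Tendsto (fun n : ℕ =>
        (∑ k ∈ Finset.range n, (binDigit x (k+1) : ℝ)) / n) atTop (𝓝 d))
    (hd0 : 0 < d) (hd12 : d < 1/2) :
    Tendsto (fun h => (takagi (x + h) - takagi x) / h) (𝓝[≠] (0:ℝ)) atTop := by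
  have hB : Tendsto (fun n => (digitSum x n : ℝ) / n) atTop (𝓝 d) := by
    simpa only [digitSum, Nat.cast_sum] using hd
  refine tendsto_atTop.2 fun C => ?_
  obtain ⟨N, hN⟩ := eventually_atTop.1 (eventually_le_two_mul_sub hd0 hd12 hB (C + 4))
  have ha : 0 < min (min x (1 - x)) ((1 / 2) ^ N) :=
    lt_min (lt_min hx.1 (by linarith [hx.2])) (by positivity)
  filter_upwards [eventually_exists_half_pow_near ha, self_mem_nhdsWithin] with e ⟨n, hna, hen⟩ he
  have hnN : N ≤ n := (pow_le_pow_iff_right_of_lt_one₀ (by norm_num) (by norm_num)).1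
    (hna.trans (min_le_right _ _))
  obtain ⟨L, hL, hslope⟩ := exists_le_takagi_slope (hna.trans ((min_le_left _ _).trans
    (min_le_left _ _))) (hna.trans ((min_le_left _ _).trans (min_le_right _ _))) he hen.1 hen.2
  linarith [hN n hnN L hL]

theorem takagi_deriv_top_of_density
    (x : ℝ) (hx : x ∈ Set.Ioo (0:ℝ) 1) (hnd : ¬ IsDyadic x)
    (d : ℝ)
    (hd : Tendsto (fun n : ℕ =>
        (∑ k ∈ Finset.range n, (binDigit x (k+1) : ℝ)) / n) atTop (𝓝 d))
    (hd0 : 0 < d) (hd12 : d < 1/2) :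
    Tendsto (fun h => (takagi (x + h) - takagi x) / h) (𝓝[≠] (0:ℝ)) atTop :=
  takagi_deriv_top_of_density_general x hx d hd hd0 hd12
end
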